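/- Let g : ℝⁿ → ℝ be convex and L-Lipschitz with ∫ exp(−g(x)) dx = 1, let λ > 0, and let g^λ be the Moreau–Yosida envelope of g. Then 1 ≤ ∫ exp(−g^λ(z)) dz ≤ exp(L²λ/2). -/

import Mathlib

/-!
Taking `z = x` in the infimum gives `g^λ ≤ g`. Conversely, the Lipschitz bound and
`L t ≤ t² / (2λ) + L² λ / 2` give `g x - L² λ / 2 ≤ g z + ‖x - z‖² / (2λ)` for every `z`,
so `g - L² λ / 2 ≤ g^λ`. Hence `exp (-g) ≤ exp (-g^λ) ≤ exp (L² λ / 2) exp (-g)`, and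
integrating against `∫ exp (-g) = 1` gives both bounds. As an infimum of continuous
functions, `g^λ` is upper semicontinuous, hence measurable.
-/

open MeasureTheory

/-- The Moreau–Yosida envelope of `g` with parameter `lam`. -/
noncomputable def mye {n : ℕ} (g : EuclideanSpace ℝ (Fin n) → ℝ) (lam : ℝ)
    (x : EuclideanSpace ℝ (Fin n)) : ℝ :=
  ⨅ z : EuclideanSpace ℝ (Fin n), (g z + ‖x - z‖ ^ 2 / (2 * lam))

open Set

lemma mul_le_sq_div_add_sq_mul (a t : ℝ) {lam : ℝ} (hlam : 0 < lam) :
    a * t ≤ t ^ 2 / (2 * lam) + a ^ 2 * lam / 2 := by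
  have hsq : 0 ≤ (t - a * lam) ^ 2 / (2 * lam) := by positivity
  have hexpand : (t - a * lam) ^ 2 / (2 * lam) = t ^ 2 / (2 * lam) - a * t + a ^ 2 * lam / 2 := by
    field_simp
    ring
  linarith

lemma integral_le_and_le_mul_of_le_of_le_mul {α : Type*} [MeasurableSpace α] {μ : Measure α}
    {f h : α → ℝ} {c : ℝ} (hf : Integrable f μ) (hh : AEStronglyMeasurable h μ)
    (hfh : ∀ x, f x ≤ h x) (hhf : ∀ x, h x ≤ c * f x) :
    ∫ x, f x ∂μ ≤ ∫ x, h x ∂μ ∧ ∫ x, h x ∂μ ≤ c * ∫ x, f x ∂μ := by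
  have hcf : Integrable (fun x => c * f x) μ := hf.const_mul c
  have hint : Integrable h μ :=
    integrable_of_le_of_le hh (ae_of_all _ hfh) (ae_of_all _ hhf) hf hcf
  refine ⟨integral_mono hf hint hfh, ?_⟩
  rw [← integral_const_mul]
  exact integral_mono hint hcf hhf

section MoreauYosida

variable {n : ℕ} {g : EuclideanSpace ℝ (Fin n) → ℝ} {L lam : ℝ}

lemma sub_le_add_sq_div (hg : ∀ x z, g x - g z ≤ L * ‖x - z‖) (hlam : 0 < lam)
    (x z : EuclideanSpace ℝ (Fin n)) :
    g x - L ^ 2 * lam / 2 ≤ g z + ‖x - z‖ ^ 2 / (2 * lam) := by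
  linarith [hg x z, mul_le_sq_div_add_sq_mul L ‖x - z‖ hlam]

lemma bddBelow_range_mye (hg : ∀ x z, g x - g z ≤ L * ‖x - z‖) (hlam : 0 < lam)
    (x : EuclideanSpace ℝ (Fin n)) :
    BddBelow (range fun z => g z + ‖x - z‖ ^ 2 / (2 * lam)) :=
  ⟨_, forall_mem_range.2 (sub_le_add_sq_div hg hlam x)⟩

lemma sub_le_mye (hg : ∀ x z, g x - g z ≤ L * ‖x - z‖) (hlam : 0 < lam)
    (x : EuclideanSpace ℝ (Fin n)) : g x - L ^ 2 * lam / 2 ≤ mye g lam x :=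
  le_ciInf (sub_le_add_sq_div hg hlam x)

lemma mye_le (hg : ∀ x z, g x - g z ≤ L * ‖x - z‖) (hlam : 0 < lam)
    (x : EuclideanSpace ℝ (Fin n)) : mye g lam x ≤ g x := by
  simpa [mye] using ciInf_le (bddBelow_range_mye hg hlam x) x

lemma upperSemicontinuous_mye (hg : ∀ x z, g x - g z ≤ L * ‖x - z‖) (hlam : 0 < lam) :
    UpperSemicontinuous (mye g lam) :=
  upperSemicontinuous_ciInf (bddBelow_range_mye hg hlam) fun _ =>
    (continuous_const.add
      (((continuous_id.sub continuous_const).norm.pow 2).div_const _)).upperSemicontinuous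

end MoreauYosida

theorem stmt_9_general {n : ℕ} (g : EuclideanSpace ℝ (Fin n) → ℝ) (L lam : ℝ)
    (hLip : ∀ x y, |g x - g y| ≤ L * ‖x - y‖)
    (hlam : 0 < lam)
    (hnorm : ∫ x : EuclideanSpace ℝ (Fin n), Real.exp (-g x) = 1) :
    1 ≤ (∫ z : EuclideanSpace ℝ (Fin n), Real.exp (-(mye g lam z))) ∧
    (∫ z : EuclideanSpace ℝ (Fin n), Real.exp (-(mye g lam z))) ≤
      Real.exp (L ^ 2 * lam / 2) := by
  have hg : ∀ x z, g x - g z ≤ L * ‖x - z‖ := fun x z => (le_abs_self _).trans (hLip x z)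
  have hint : Integrable fun x => Real.exp (-g x) :=
    Integrable.of_integral_ne_zero (by rw [hnorm]; exact one_ne_zero)
  have hmeas : AEStronglyMeasurable fun z => Real.exp (-(mye g lam z)) :=
    (Real.measurable_exp.comp (upperSemicontinuous_mye hg hlam).measurable.neg).aestronglyMeasurable
  have hlower : ∀ x, Real.exp (-g x) ≤ Real.exp (-(mye g lam x)) := fun x =>
    Real.exp_le_exp.2 (neg_le_neg (mye_le hg hlam x))
  have hupper : ∀ x, Real.exp (-(mye g lam x)) ≤ Real.exp (L ^ 2 * lam / 2) * Real.exp (-g x) :=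
    fun x => by
      rw [← Real.exp_add]
      exact Real.exp_le_exp.2 (by linarith [sub_le_mye hg hlam x])
  simpa only [hnorm, mul_one] using
    integral_le_and_le_mul_of_le_of_le_mul hint hmeas hlower hupper

theorem stmt_9 {n : ℕ} (g : EuclideanSpace ℝ (Fin n) → ℝ) (L lam : ℝ)
    (hconv : ConvexOn ℝ Set.univ g)
    (hLip : ∀ x y, |g x - g y| ≤ L * ‖x - y‖)
    (hlam : 0 < lam)
    (hnorm : ∫ x : EuclideanSpace ℝ (Fin n), Real.exp (-g x) = 1) :
    1 ≤ (∫ z : EuclideanSpace ℝ (Fin n), Real.exp (-(mye g lam z))) ∧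
    (∫ z : EuclideanSpace ℝ (Fin n), Real.exp (-(mye g lam z))) ≤
      Real.exp (L ^ 2 * lam / 2) :=
  stmt_9_general g L lam hLip hlam hnorm
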